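/- For a unit vector c ∈ ℂ^d and |φ⟩ = Σ_l c_l |Ψ_{0l}⟩, the twirl T(|φ⟩⟨φ|) over the group G = {U_{k,l} ⊗ U_{k,-l}} equals ρ_λ = Σ_l λ_l |Ψ_{0l}⟩⟨Ψ_{0l}| with λ_l = |c_l|². -/

import Mathlib

open scoped BigOperators Classical ComplexOrder

/-- The primitive `d`-th root of unity `η = e^{2πi/d}`. -/
noncomputable def eta (d : ℕ) : ℂ := Complex.exp (2 * (Real.pi : ℂ) * Complex.I / d)

/-- The unitaries `U_{kl} = Σ_r η^{rl} |k+r⟩⟨r|` (index addition mod `d`). -/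
noncomputable def Umat (d : ℕ) [NeZero d] (k l : Fin d) : Matrix (Fin d) (Fin d) ℂ :=
  fun i r => if i = k + r then eta d ^ ((r : ℕ) * (l : ℕ)) else 0

/-- The maximally entangled vectors `Ψ_{kl} = (1/√d) Σ_j |j⟩ ⊗ U_{kl}|j⟩`,
as functions on `Fin d × Fin d` (component at `(a,b)` is `(1/√d)·(U_{kl})_{b a}`). -/
noncomputable def Psi (d : ℕ) [NeZero d] (k l : Fin d) : Fin d × Fin d → ℂ :=
  fun p => (1 / (Real.sqrt d : ℂ)) * Umat d k l p.2 p.1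

/-- Rank-one projector `|v⟩⟨v|`. -/
noncomputable def outer {ι : Type*} (v : ι → ℂ) : Matrix ι ι ℂ :=
  fun i j => v i * (starRingEnd ℂ) (v j)

/-- The symmetry group element `U_{k,l} ⊗ U_{k,-l}` on `ℂ^d ⊗ ℂ^d`. -/
noncomputable def Gmat (d : ℕ) [NeZero d] (k l : Fin d) :
    Matrix (Fin d × Fin d) (Fin d × Fin d) ℂ :=
  fun p q => Umat d k l p.1 q.1 * Umat d k (-l) p.2 q.2

/-- The twirl `T(ρ) = d⁻² Σ_{g∈G} g* ρ g`. -/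
noncomputable def twirl (d : ℕ) [NeZero d]
    (ρ : Matrix (Fin d × Fin d) (Fin d × Fin d) ℂ) :
    Matrix (Fin d × Fin d) (Fin d × Fin d) ℂ :=
  (((d : ℂ)) ^ 2)⁻¹ • ∑ k, ∑ l, (Gmat d k l).conjTranspose * ρ * Gmat d k l

/-- Expectation value `⟨v|ρ|v⟩`. -/
noncomputable def expec {ι : Type*} [Fintype ι] (v : ι → ℂ)
    (ρ : Matrix ι ι ℂ) : ℂ :=
  ∑ p, ∑ q, (starRingEnd ℂ) (v p) * ρ p q * v q

/-- The state `ρ_λ = Σ_l λ_l |Ψ_{0l}⟩⟨Ψ_{0l}|`. -/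
noncomputable def rhoLam (d : ℕ) [NeZero d] (lam : Fin d → ℝ) :
    Matrix (Fin d × Fin d) (Fin d × Fin d) ℂ :=
  ∑ l, ((lam l : ℝ) : ℂ) • outer (Psi d 0 l)

/-! Every `Ψ_{0l}` is a common eigenvector of the `g*`, `g = U_{k,m} ⊗ U_{k,-m}`, with eigenvalue
`η^{kl}`: the phases `η^{am}` and `η^{-am}` of the two tensor factors cancel on the support
`{(a,a)}`. Hence `g* |φ⟩⟨φ| g = Σ_{l,l'} c_l c̄_{l'} η^{k(l-l')} |Ψ_{0l}⟩⟨Ψ_{0l'}|`, and averaging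
over `k` kills the off-diagonal terms by orthogonality of the characters of `ℤ/d`. -/

open Matrix ComplexConjugate

lemma outer_eq_vecMulVec {ι : Type*} (v : ι → ℂ) : outer v = vecMulVec v (star v) := rfl

lemma conjTranspose_mul_outer_mul {ι : Type*} [Fintype ι] (G : Matrix ι ι ℂ) (v : ι → ℂ) :
    Gᴴ * outer v * G = outer (Gᴴ *ᵥ v) := by
  rw [outer_eq_vecMulVec, outer_eq_vecMulVec, mul_vecMulVec, vecMulVec_mul, star_mulVec,
    conjTranspose_conjTranspose]

lemma outer_sum_smul {ι κ : Type*} [Fintype κ] (a : κ → ℂ) (v : κ → ι → ℂ) :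
    outer (∑ l, a l • v l) =
      ∑ l, ∑ l', (a l * conj (a l')) • vecMulVec (v l) (star (v l')) := by
  ext i j
  simp only [outer, Finset.sum_apply, Pi.smul_apply, smul_eq_mul, map_sum, map_mul,
    Finset.sum_mul_sum, Matrix.sum_apply, Matrix.smul_apply, vecMulVec_apply, Pi.star_apply,
    RCLike.star_def]
  exact Finset.sum_congr rfl fun l _ => Finset.sum_congr rfl fun l' _ => by ring

lemma pow_val_add_mul {M : Type*} [CommMonoid M] {ζ : M} {d : ℕ} (hζ : ζ ^ d = 1)
    (x y : Fin d) (n : ℕ) :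
    ζ ^ (((x + y : Fin d) : ℕ) * n) = ζ ^ ((x : ℕ) * n) * ζ ^ ((y : ℕ) * n) := by
  rw [Fin.val_add, pow_mul, ← pow_eq_pow_mod _ hζ, pow_add, mul_pow, ← pow_mul, ← pow_mul]

lemma IsPrimitiveRoot.sum_pow_mul_conj_pow {ζ : ℂ} {d : ℕ} (hζ : IsPrimitiveRoot ζ d)
    (l l' : Fin d) :
    ∑ k : Fin d, ζ ^ ((k : ℕ) * l) * conj (ζ ^ ((k : ℕ) * l')) = if l = l' then (d : ℂ) else 0 := by
  have hconj : conj ζ = ζ⁻¹ := (Complex.inv_eq_conj (hζ.norm'_eq_one (Fin.pos l).ne')).symm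
  set u := ζ ^ (l : ℕ) * ζ⁻¹ ^ (l' : ℕ) with hu
  have hterm (k : ℕ) : ζ ^ (k * l) * conj (ζ ^ (k * l')) = u ^ k := by
    rw [map_pow, hconj, hu, mul_pow, ← pow_mul, ← pow_mul, mul_comm k, mul_comm k]
  have hu1 : u = 1 ↔ l = l' := by
    rw [hu, inv_pow, mul_inv_eq_one₀ (pow_ne_zero _ (hζ.ne_zero (Fin.pos l).ne')), Fin.ext_iff]
    exact ⟨hζ.pow_inj l.isLt l'.isLt, congrArg _⟩
  simp_rw [hterm]
  rw [Fin.sum_univ_eq_sum_range (u ^ ·)]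
  split_ifs with h
  · simp [hu1.mpr h]
  · have hud : u ^ d = 1 := by
      rw [hu, mul_pow, ← pow_mul, ← pow_mul, mul_comm (l : ℕ), mul_comm (l' : ℕ), pow_mul,
        pow_mul, inv_pow, hζ.pow_eq_one, inv_one, one_pow, one_pow, mul_one]
    rw [geom_sum_eq (mt hu1.mp h), hud, sub_self, zero_div]

lemma sum_outer_sum_pow_mul_smul {ι : Type*} {ζ : ℂ} {d : ℕ} (hζ : IsPrimitiveRoot ζ d)
    (a : Fin d → ℂ) (v : Fin d → ι → ℂ) :
    ∑ k : Fin d, outer (∑ l : Fin d, (ζ ^ ((k : ℕ) * l) * a l) • v l) =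
      (d : ℂ) • ∑ l, ((‖a l‖ ^ 2 : ℝ) : ℂ) • outer (v l) := by
  calc ∑ k : Fin d, outer (∑ l : Fin d, (ζ ^ ((k : ℕ) * l) * a l) • v l)
      = ∑ l : Fin d, ∑ l' : Fin d, (a l * conj (a l') *
          ∑ k : Fin d, ζ ^ ((k : ℕ) * l) * conj (ζ ^ ((k : ℕ) * l'))) •
            vecMulVec (v l) (star (v l')) := by
        simp only [outer_sum_smul, Finset.mul_sum, Finset.sum_smul]
        rw [Finset.sum_comm]
        refine Finset.sum_congr rfl fun l _ => ?_
        rw [Finset.sum_comm]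
        refine Finset.sum_congr rfl fun l' _ => Finset.sum_congr rfl fun k _ => ?_
        rw [map_mul]
        ring_nf
    _ = (d : ℂ) • ∑ l, ((‖a l‖ ^ 2 : ℝ) : ℂ) • outer (v l) := by
        simp only [hζ.sum_pow_mul_conj_pow, mul_ite, mul_zero, ite_smul, zero_smul,
          Finset.sum_ite_eq, Finset.mem_univ, if_true, Finset.smul_sum, smul_smul,
          Complex.mul_conj, Complex.normSq_eq_norm_sq, outer_eq_vecMulVec]
        refine Finset.sum_congr rfl fun l _ => ?_
        rw [mul_comm]

lemma isPrimitiveRoot_eta (d : ℕ) [NeZero d] : IsPrimitiveRoot (eta d) d :=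
  Complex.isPrimitiveRoot_exp d (NeZero.ne d)

lemma Psi_zero_apply (d : ℕ) [NeZero d] (l : Fin d) (p : Fin d × Fin d) :
    Psi d 0 l p = if p.2 = p.1 then eta d ^ ((p.1 : ℕ) * l) / Real.sqrt d else 0 := by
  simp [Psi, Umat, div_eq_inv_mul]

lemma Gmat_conjTranspose_mulVec_Psi (d : ℕ) [NeZero d] (k m l : Fin d) :
    (Gmat d k m)ᴴ *ᵥ Psi d 0 l = eta d ^ ((k : ℕ) * l) • Psi d 0 l := by
  have hη := (isPrimitiveRoot_eta d).pow_eq_one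
  ext ⟨a, b⟩
  have hphase : eta d ^ ((a : ℕ) * m) * eta d ^ ((a : ℕ) * (-m : Fin d)) = 1 := by
    rw [mul_comm (a : ℕ), mul_comm (a : ℕ), ← pow_val_add_mul hη, add_neg_cancel, Fin.val_zero,
      zero_mul, pow_zero]
  simp only [mulVec, dotProduct, conjTranspose_apply, Gmat, Umat, Fintype.sum_prod_type,
    Pi.smul_apply, smul_eq_mul, Psi_zero_apply]
  by_cases hab : b = a
  · subst hab
    simp only [mul_ite, ite_mul, hphase, zero_mul, mul_zero, apply_ite (star : ℂ → ℂ), star_one,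
      star_zero, one_mul, Finset.sum_ite_eq', Finset.mem_univ, ↓reduceIte]
    rw [pow_val_add_mul hη, mul_div_assoc]
  · simp [apply_ite (star : ℂ → ℂ), mul_ite, ite_mul, hab]

theorem twirl_of_Psi_superposition_general (d : ℕ) [NeZero d] (c : Fin d → ℂ) :
    twirl d (outer (fun p => ∑ l, c l * Psi d 0 l p)) =
      rhoLam d (fun l => ‖c l‖ ^ 2) := by
  have hφ : (fun p => ∑ l, c l * Psi d 0 l p) = ∑ l, c l • Psi d 0 l := by
    ext p
    simp [Finset.sum_apply]
  have hGφ (k m : Fin d) : (Gmat d k m)ᴴ *ᵥ ∑ l, c l • Psi d 0 l =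
      ∑ l : Fin d, (eta d ^ ((k : ℕ) * l) * c l) • Psi d 0 l := by
    simp only [mulVec_sum, mulVec_smul, Gmat_conjTranspose_mulVec_Psi, smul_smul, mul_comm]
  have hd : (d : ℂ) ≠ 0 := Nat.cast_ne_zero.mpr (NeZero.ne d)
  rw [twirl, hφ]
  simp only [conjTranspose_mul_outer_mul, hGφ, Finset.sum_const, Finset.card_univ,
    Fintype.card_fin, ← Nat.cast_smul_eq_nsmul ℂ, ← Finset.smul_sum,
    sum_outer_sum_pow_mul_smul (isPrimitiveRoot_eta d), smul_smul]
  rw [rhoLam, ← sq, inv_mul_cancel₀ (pow_ne_zero 2 hd), one_smul]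

theorem twirl_of_Psi_superposition (d : ℕ) [NeZero d] (c : Fin d → ℂ)
    (hc : ∑ l, ‖c l‖ ^ 2 = 1) :
    twirl d (outer (fun p => ∑ l, c l * Psi d 0 l p)) =
      rhoLam d (fun l => ‖c l‖ ^ 2) :=
  twirl_of_Psi_superposition_general d c
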